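/- arXiv:2307.11059 — 2 statements merged into one kernel-verified Lean document; each statement's English description precedes it below -/
import Mathlib

section
/- Let D be a dense countably infinite mesh in I^n with an enumeration (d_i)_{i∈ℕ} of its elements, and fix an integer k with 1 ≤ k ≤ n. Let A, B : D → I be functions with A ≤ B and L_k^{(A,B)}(DU) ≥ 0 for all DU ∈ R_k(D), and assume A(v) = B(v) for all vertices v of the unit cube I^n. Define the sequence of functions A^{(i)} : D → I by A^{(0)} = A and, for i ≥ 1, A^{(i)}(d) = A^{(i−1)}(d) for d ≠ d_i and A^{(i)}(d_i) = A^{(i−1)}(d_i) + γ_{k,D}^{(A^{(i−1)},B)}(d_i). Let C : D → I be the pointwise limit of (A^{(i)})_{i∈ℕ} (which exists since at each point the sequence is increasing and bounded). Then C is k-increasing on D, i.e., L_k^{(C,C)}(DU) ≥ 0 for all DU ∈ R_k(D). -/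
/-!
Raising `A` at a point by `γ ≤ P⁻` keeps both `A ≤ B` and `L^{(A,B)} ≥ 0`, so both pass to the
limit `C`. The sequence is constant at `dᵢ` after step `i`; hence wherever `C < B` the last raise
there was by exactly `P⁻`, and box families nearly realizing that infimum for `A⁽ⁱ⁾` have
arbitrarily small `L^{(C,B)}` per unit of negative multiplicity at `dᵢ` (such families exist
because `dᵢ` is not a vertex of the cube).

Since `L^{(C,C)}(X) = L^{(C,B)}(X) - ∑ m_X(u)⁺ (B(u) - C(u))`, it remains to bound this positive
excess by `L^{(C,B)}(X)`, one point `x` at a time: with such a family `W`, the multiplicity at `x`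
cancels in `a • X + b • W`, whose excess is bounded by induction, and passing to the combination
only loses positive parts, as `t ↦ t⁺` is subadditive.
-/

open scoped Classical BigOperators

namespace KIncr

/-- Points of the ambient space `ℝ^n`. -/
abbrev Pt (n : ℕ) := Fin n → ℝ

/-- Membership in the unit cube `I^n = [0,1]^n`. -/
def inCube {n : ℕ} (x : Pt n) : Prop := ∀ i, x i ∈ Set.Icc (0:ℝ) 1

/-- The unit cube as a set. -/
def cubeSet (n : ℕ) : Set (Pt n) := {x | inCube x}

/-- Vertices of the unit cube `I^n`. -/
def isCubeVertex {n : ℕ} (x : Pt n) : Prop := ∀ i, x i = 0 ∨ x i = 1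

/-- A (formal) box, given by its lower-left and upper-right corners. -/
structure Box (n : ℕ) where
  lo : Pt n
  hi : Pt n

/-- `R` is a `k`-box in `I^n`: exactly `k` coordinates are nondegenerate. -/
def Box.IsKBox {n : ℕ} (k : ℕ) (R : Box n) : Prop :=
  inCube R.lo ∧ inCube R.hi ∧ (∀ i, R.lo i ≤ R.hi i) ∧
    (Finset.univ.filter (fun i => R.lo i < R.hi i)).card = k

/-- `v` is a vertex of the box `R`. -/
def Box.IsVertex {n : ℕ} (R : Box n) (v : Pt n) : Prop :=
  ∀ i, v i = R.lo i ∨ v i = R.hi i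

/-- The (finite) set of vertices of a box. -/
noncomputable def Box.vertices {n : ℕ} (R : Box n) : Finset (Pt n) :=
  Finset.image (fun ε : Fin n → Bool => fun i => if ε i then R.hi i else R.lo i)
    Finset.univ

/-- The sign `(-1)^(m-(n-k))` of a vertex `v` of a `k`-box, where
`m = #{i : v i = lo i}`;  since `m ≥ n - k`, this equals `(-1)^(m+(n-k))`. -/
noncomputable def Box.sign {n : ℕ} (k : ℕ) (R : Box n) (v : Pt n) : ℤ :=
  (-1) ^ ((Finset.univ.filter (fun i => v i = R.lo i)).card + (n - k))

/-- The multiplicity `m_R(u)` of a point `u` with respect to a `k`-box `R`. -/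
noncomputable def Box.mult {n : ℕ} (k : ℕ) (R : Box n) (u : Pt n) : ℤ :=
  if R.IsVertex u then R.sign k u else 0

/-- `V_{A,k}(R) = ∑_{v ∈ ver R} sign_R(v) · A(v)`. -/
noncomputable def Vvol {n : ℕ} (k : ℕ) (A : Pt n → ℝ) (R : Box n) : ℝ :=
  ∑ v ∈ R.vertices, (R.sign k v : ℝ) * A v

/-- A function is `k`-increasing on `D` if `V_{A,k}(R) ≥ 0` for every `k`-box
with all vertices in `D`. -/
def KIncreasingOn {n : ℕ} (k : ℕ) (D : Set (Pt n)) (A : Pt n → ℝ) : Prop :=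
  ∀ R : Box n, R.IsKBox k → (∀ v ∈ R.vertices, v ∈ D) → 0 ≤ Vvol k A R

/-- The multiplicity `m_DU(u)` of a point with respect to a formal (multiset)
disjoint union of `k`-boxes. -/
noncomputable def multDU {n : ℕ} (k : ℕ) (DU : Multiset (Box n)) (u : Pt n) : ℤ :=
  (DU.map (fun R => R.mult k u)).sum

/-- `DU ∈ R_k(D)`: every box of the multiset `DU` is a `k`-box with all its
vertices in `D`. -/
def memRk {n : ℕ} (k : ℕ) (D : Set (Pt n)) (DU : Multiset (Box n)) : Prop :=
  ∀ R ∈ DU, R.IsKBox k ∧ ∀ v ∈ R.vertices, v ∈ D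

/-- `L_k^{(A,B)}(DU) = ∑_{m_DU(u)>0} m_DU(u)·B(u) + ∑_{m_DU(u)<0} m_DU(u)·A(u)`. -/
noncomputable def Lk {n : ℕ} (k : ℕ) (A B : Pt n → ℝ) (DU : Multiset (Box n)) : ℝ :=
  ∑ u ∈ DU.toFinset.biUnion Box.vertices,
    (if 0 < multDU k DU u then (multDU k DU u : ℝ) * B u
     else if multDU k DU u < 0 then (multDU k DU u : ℝ) * A u else 0)

/-- `P⁻_{k,D}^{(A,B)}(x)`, with the Mathlib convention `sInf ∅ = 0`. -/
noncomputable def Pneg {n : ℕ} (k : ℕ) (D : Set (Pt n)) (A B : Pt n → ℝ) (x : Pt n) : ℝ :=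
  sInf {r : ℝ | ∃ DU : Multiset (Box n), memRk k D DU ∧ multDU k DU x < 0 ∧
    r = Lk k A B DU / |(multDU k DU x : ℝ)|}

/-- `P⁺_{k,D}^{(A,B)}(x)`, with the Mathlib convention `sInf ∅ = 0`. -/
noncomputable def Ppos {n : ℕ} (k : ℕ) (D : Set (Pt n)) (A B : Pt n → ℝ) (x : Pt n) : ℝ :=
  sInf {r : ℝ | ∃ DU : Multiset (Box n), memRk k D DU ∧ 0 < multDU k DU x ∧
    r = Lk k A B DU / |(multDU k DU x : ℝ)|}

/-- `γ_{k,D}^{(A,B)}(x) = min {P⁻_{k,D}^{(A,B)}(x), B(x) - A(x)}`. -/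
noncomputable def gammaK {n : ℕ} (k : ℕ) (D : Set (Pt n)) (A B : Pt n → ℝ) (x : Pt n) : ℝ :=
  min (Pneg k D A B x) (B x - A x)

/-- `δ_{k,D}^{(A,B)}(x) = min {P⁺_{k,D}^{(A,B)}(x), B(x) - A(x)}`. -/
noncomputable def deltaK {n : ℕ} (k : ℕ) (D : Set (Pt n)) (A B : Pt n → ℝ) (x : Pt n) : ℝ :=
  min (Ppos k D A B x) (B x - A x)

/-- A dense countably infinite mesh `D = ∏ δᵢ` in `I^n`. -/
def IsMesh {n : ℕ} (D : Set (Pt n)) : Prop :=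
  ∃ δ : Fin n → Set ℝ,
    (∀ i, δ i ⊆ Set.Icc (0:ℝ) 1 ∧ (δ i).Countable ∧ (δ i).Infinite ∧
      Set.Icc (0:ℝ) 1 ⊆ closure (δ i) ∧ (0:ℝ) ∈ δ i ∧ (1:ℝ) ∈ δ i) ∧
    D = {x : Pt n | ∀ i, x i ∈ δ i}

/-- `A` is grounded: it vanishes whenever some coordinate is `0`. -/
def Grounded {n : ℕ} (A : Pt n → ℝ) : Prop :=
  ∀ x : Pt n, inCube x → (∃ i, x i = 0) → A x = 0

/-- `A` is 1-increasing (increasing in each variable). -/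
def OneIncreasing {n : ℕ} (A : Pt n → ℝ) : Prop :=
  ∀ x y : Pt n, inCube x → inCube y → (∀ i, x i ≤ y i) → A x ≤ A y

/-- `A` has uniform marginals. -/
def UniformMarginals {n : ℕ} (A : Pt n → ℝ) : Prop :=
  ∀ i : Fin n, ∀ t ∈ Set.Icc (0:ℝ) 1, A (Function.update (fun _ => (1:ℝ)) i t) = t

/-- `A` is a standardized function. -/
def Standardized {n : ℕ} (A : Pt n → ℝ) : Prop :=
  Grounded A ∧ OneIncreasing A ∧ A (fun _ => (1:ℝ)) = 1

/-- `A` is a semicopula. -/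
def Semicopula {n : ℕ} (A : Pt n → ℝ) : Prop :=
  Grounded A ∧ OneIncreasing A ∧ UniformMarginals A

/-- `A` maps the unit cube into `I = [0,1]`. -/
def MapsToI {n : ℕ} (A : Pt n → ℝ) : Prop :=
  ∀ x : Pt n, inCube x → A x ∈ Set.Icc (0:ℝ) 1

/-- Condition S: all discontinuities of all sections of `A` lie in the
countable set `S`. -/
def CondS {n : ℕ} (A : Pt n → ℝ) (S : Set ℝ) : Prop :=
  ∀ u : Pt n, inCube u → ∀ i : Fin n, ∀ t ∈ Set.Icc (0:ℝ) 1, t ∉ S →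
    ContinuousWithinAt (fun s => A (Function.update u i s)) (Set.Icc (0:ℝ) 1) t

/-- A quasi-copula: a semicopula that is 1-Lipschitz w.r.t. the ℓ¹-norm. -/
def QuasiCopula {n : ℕ} (A : Pt n → ℝ) : Prop :=
  Semicopula A ∧ ∀ x y : Pt n, inCube x → inCube y → |A x - A y| ≤ ∑ i, |x i - y i|

section Multiplicity

variable {n k : ℕ} {D : Set (Pt n)}

theorem Box.mem_vertices {R : Box n} {v : Pt n} : v ∈ R.vertices ↔ R.IsVertex v := by
  constructor
  · rintro hv i
    obtain ⟨ε, -, rfl⟩ := Finset.mem_image.1 hv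
    rcases Bool.eq_false_or_eq_true (ε i) with h | h <;> simp [h]
  · intro hv
    refine Finset.mem_image.2
      ⟨fun i => decide (v i = R.hi i), Finset.mem_univ _, funext fun i => ?_⟩
    by_cases h : v i = R.hi i
    · simp [h]
    · simp only [h, decide_false, Bool.false_eq_true, if_false]
      exact ((hv i).resolve_right h).symm

theorem Box.mem_vertices_of_mult_ne_zero {R : Box n} {u : Pt n} (h : R.mult k u ≠ 0) :
    u ∈ R.vertices := by
  by_contra hu
  exact h (if_neg (mt Box.mem_vertices.2 hu))

noncomputable def vertexSet (X : Multiset (Box n)) : Finset (Pt n) :=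
  X.toFinset.biUnion Box.vertices

theorem mem_vertexSet {X : Multiset (Box n)} {u : Pt n} :
    u ∈ vertexSet X ↔ ∃ R ∈ X, u ∈ R.vertices := by
  simp [vertexSet]

theorem mem_vertexSet_of_multDU_ne_zero {X : Multiset (Box n)} {u : Pt n}
    (h : multDU k X u ≠ 0) : u ∈ vertexSet X := by
  obtain ⟨R, hR, hRu⟩ : ∃ R ∈ X, R.mult k u ≠ 0 := by
    by_contra! h'
    exact h (Multiset.sum_eq_zero fun m hm => by
      obtain ⟨R, hR, rfl⟩ := Multiset.mem_map.1 hm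
      exact h' R hR)
  exact mem_vertexSet.2 ⟨R, hR, Box.mem_vertices_of_mult_ne_zero hRu⟩

theorem memRk.mem_of_mem_vertexSet {X : Multiset (Box n)} (hX : memRk k D X) {u : Pt n}
    (hu : u ∈ vertexSet X) : u ∈ D := by
  obtain ⟨R, hR, hRu⟩ := mem_vertexSet.1 hu
  exact (hX R hR).2 u hRu

theorem memRk.nsmul_add_nsmul {X W : Multiset (Box n)} (hX : memRk k D X) (hW : memRk k D W)
    (a b : ℕ) : memRk k D (a • X + b • W) := by
  intro R hR
  rcases Multiset.mem_add.1 hR with h | h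
  · exact hX R (Multiset.mem_of_mem_nsmul h)
  · exact hW R (Multiset.mem_of_mem_nsmul h)

theorem vertexSet_nsmul_add_nsmul_subset (X W : Multiset (Box n)) (a b : ℕ) :
    vertexSet (a • X + b • W) ⊆ vertexSet X ∪ vertexSet W := by
  intro u hu
  obtain ⟨R, hR, hRu⟩ := mem_vertexSet.1 hu
  rcases Multiset.mem_add.1 hR with h | h
  · exact Finset.mem_union_left _ (mem_vertexSet.2 ⟨R, Multiset.mem_of_mem_nsmul h, hRu⟩)
  · exact Finset.mem_union_right _ (mem_vertexSet.2 ⟨R, Multiset.mem_of_mem_nsmul h, hRu⟩)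

theorem multDU_nsmul_add_nsmul (X W : Multiset (Box n)) (a b : ℕ) (u : Pt n) :
    multDU k (a • X + b • W) u = a * multDU k X u + b * multDU k W u := by
  simp [multDU, Multiset.map_nsmul, Multiset.sum_nsmul]

theorem Lk_eq_sum_of_subset (A B : Pt n → ℝ) {X : Multiset (Box n)} {S : Finset (Pt n)}
    (hS : vertexSet X ⊆ S) :
    Lk k A B X = ∑ u ∈ S, ((multDU k X u : ℝ) * A u + (multDU k X u : ℝ)⁺ * (B u - A u)) := by
  rw [Lk, ← vertexSet, Finset.sum_subset hS fun u _ hu => ?_]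
  · refine Finset.sum_congr rfl fun u _ => ?_
    rcases lt_trichotomy (multDU k X u) 0 with h | h | h
    · have h' : (multDU k X u : ℝ) < 0 := by exact_mod_cast h
      rw [if_neg h.not_gt, if_pos h, posPart_eq_zero.2 h'.le]
      ring
    · simp [h]
    · have h' : (0 : ℝ) < multDU k X u := by exact_mod_cast h
      rw [if_pos h, posPart_eq_self.2 h'.le]
      ring
  · have h : multDU k X u = 0 := by
      by_contra h
      exact hu (mem_vertexSet_of_multDU_ne_zero h)
    simp [h]

theorem Lk_sub_Lk_left (A A' B : Pt n → ℝ) {X : Multiset (Box n)} {S : Finset (Pt n)}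
    (hS : vertexSet X ⊆ S) :
    Lk k A' B X - Lk k A B X = -∑ u ∈ S, (multDU k X u : ℝ)⁻ * (A' u - A u) := by
  rw [Lk_eq_sum_of_subset A' B hS, Lk_eq_sum_of_subset A B hS, ← Finset.sum_sub_distrib,
    ← Finset.sum_neg_distrib]
  refine Finset.sum_congr rfl fun u _ => ?_
  linear_combination (A u - A' u) * posPart_sub_negPart (multDU k X u : ℝ)

noncomputable def posExcess (k : ℕ) (C B : Pt n → ℝ) (S : Finset (Pt n))
    (X : Multiset (Box n)) : ℝ :=
  ∑ u ∈ S, (multDU k X u : ℝ)⁺ * (B u - C u)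

theorem Lk_sub_Lk_self_eq_posExcess (C B : Pt n → ℝ) {X : Multiset (Box n)} {S : Finset (Pt n)}
    (hS : vertexSet X ⊆ S) : Lk k C B X - Lk k C C X = posExcess k C B S X := by
  rw [Lk_eq_sum_of_subset C B hS, Lk_eq_sum_of_subset C C hS, ← Finset.sum_sub_distrib, posExcess]
  exact Finset.sum_congr rfl fun u _ => by ring

theorem Lk_self_nsmul_add_nsmul (C : Pt n → ℝ) (X W : Multiset (Box n)) (a b : ℕ) :
    Lk k C C (a • X + b • W) = a * Lk k C C X + b * Lk k C C W := by
  have hX : vertexSet X ⊆ vertexSet X ∪ vertexSet W := Finset.subset_union_left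
  have hW : vertexSet W ⊆ vertexSet X ∪ vertexSet W := Finset.subset_union_right
  rw [Lk_eq_sum_of_subset C C (vertexSet_nsmul_add_nsmul_subset X W a b),
    Lk_eq_sum_of_subset C C hX, Lk_eq_sum_of_subset C C hW, Finset.mul_sum, Finset.mul_sum,
    ← Finset.sum_add_distrib]
  refine Finset.sum_congr rfl fun u _ => ?_
  rw [multDU_nsmul_add_nsmul]
  push_cast
  ring

end Multiplicity

section Raising

variable {n k : ℕ} {D : Set (Pt n)}

def AdmissiblePair (k : ℕ) (D : Set (Pt n)) (A B : Pt n → ℝ) : Prop :=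
  (∀ u ∈ D, A u ≤ B u) ∧ ∀ X : Multiset (Box n), memRk k D X → 0 ≤ Lk k A B X

theorem Pneg_nonneg {A B : Pt n → ℝ} (hL : ∀ X : Multiset (Box n), memRk k D X → 0 ≤ Lk k A B X)
    (x : Pt n) : 0 ≤ Pneg k D A B x :=
  Real.sInf_nonneg fun _ ⟨X, hX, _, hr⟩ => hr ▸ div_nonneg (hL X hX) (abs_nonneg _)

theorem Pneg_le {A B : Pt n → ℝ} (hL : ∀ X : Multiset (Box n), memRk k D X → 0 ≤ Lk k A B X)
    {X : Multiset (Box n)} (hX : memRk k D X) {x : Pt n} (hx : multDU k X x < 0) :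
    Pneg k D A B x ≤ Lk k A B X / |(multDU k X x : ℝ)| :=
  csInf_le ⟨0, fun _ ⟨Y, hY, _, hr⟩ => hr ▸ div_nonneg (hL Y hY) (abs_nonneg _)⟩ ⟨X, hX, hx, rfl⟩

theorem AdmissiblePair.gammaK_nonneg {A B : Pt n → ℝ} (h : AdmissiblePair k D A B) {x : Pt n}
    (hx : x ∈ D) : 0 ≤ gammaK k D A B x :=
  le_min (Pneg_nonneg h.2 x) (sub_nonneg.2 (h.1 x hx))

theorem gammaK_eq_Pneg {A B : Pt n → ℝ} {x : Pt n} (h : gammaK k D A B x < B x - A x) :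
    gammaK k D A B x = Pneg k D A B x :=
  min_eq_left ((min_lt_iff.1 h).resolve_right (lt_irrefl _)).le

theorem negPart_intCast_eq_abs {m : ℤ} (hm : m < 0) : (m : ℝ)⁻ = |(m : ℝ)| := by
  have hm' : (m : ℝ) < 0 := by exact_mod_cast hm
  rw [negPart_eq_neg.2 hm'.le, abs_of_neg hm']

theorem Lk_update (A B : Pt n → ℝ) (x : Pt n) (g : ℝ) (X : Multiset (Box n)) :
    Lk k (Function.update A x (A x + g)) B X = Lk k A B X - (multDU k X x : ℝ)⁻ * g := by
  have hS : vertexSet X ⊆ insert x (vertexSet X) := Finset.subset_insert _ _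
  have h := Lk_sub_Lk_left (k := k) A (Function.update A x (A x + g)) B hS
  rw [Finset.sum_eq_single_of_mem x (Finset.mem_insert_self _ _) fun u _ hu => by
    rw [Function.update_of_ne hu, sub_self, mul_zero]] at h
  rw [Function.update_self, add_sub_cancel_left] at h
  linarith

theorem AdmissiblePair.update_gammaK {A B : Pt n → ℝ} (h : AdmissiblePair k D A B) (x : Pt n) :
    AdmissiblePair k D (Function.update A x (A x + gammaK k D A B x)) B := by
  refine ⟨fun u hu => ?_, fun X hX => ?_⟩
  · rcases eq_or_ne u x with rfl | hux
    · have hγ : gammaK k D A B u ≤ B u - A u := min_le_right _ _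
      rw [Function.update_self]
      linarith
    · rw [Function.update_of_ne hux]
      exact h.1 u hu
  · rw [Lk_update]
    rcases le_or_gt 0 (multDU k X x) with hm | hm
    · rw [negPart_eq_zero.2 (by exact_mod_cast hm), zero_mul, sub_zero]
      exact h.2 X hX
    · have habs : 0 < |(multDU k X x : ℝ)| := abs_pos.2 (by exact_mod_cast hm.ne)
      have hγ : gammaK k D A B x ≤ Lk k A B X / |(multDU k X x : ℝ)| :=
        (min_le_left _ _).trans (Pneg_le h.2 hX hm)
      rw [negPart_intCast_eq_abs hm, sub_nonneg, ← le_div_iff₀' habs]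
      exact hγ

theorem tendsto_Lk {As : ℕ → Pt n → ℝ} {B C : Pt n → ℝ} {X : Multiset (Box n)}
    (hC : ∀ u ∈ vertexSet X, Filter.Tendsto (fun i => As i u) Filter.atTop (nhds (C u))) :
    Filter.Tendsto (fun i => Lk k (As i) B X) Filter.atTop (nhds (Lk k C B X)) := by
  simp only [Lk_eq_sum_of_subset _ B (subset_refl (vertexSet X))]
  exact tendsto_finsetSum _ fun u hu =>
    ((hC u hu).const_mul _).add (((hC u hu).const_sub _).const_mul _)

theorem AdmissiblePair.of_tendsto {As : ℕ → Pt n → ℝ} {B C : Pt n → ℝ}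
    (h : ∀ i, AdmissiblePair k D (As i) B)
    (hC : ∀ u ∈ D, Filter.Tendsto (fun i => As i u) Filter.atTop (nhds (C u))) :
    AdmissiblePair k D C B :=
  ⟨fun u hu => le_of_tendsto' (hC u hu) fun i => (h i).1 u hu, fun X hX =>
    ge_of_tendsto' (tendsto_Lk fun u hu => hC u (hX.mem_of_mem_vertexSet hu)) fun i => (h i).2 X hX⟩

theorem Lk_le_sub_negPart_mul {A C B : Pt n → ℝ} {W : Multiset (Box n)}
    (hAC : ∀ u ∈ vertexSet W, A u ≤ C u) {x : Pt n} (hx : x ∈ vertexSet W) :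
    Lk k C B W ≤ Lk k A B W - (multDU k W x : ℝ)⁻ * (C x - A x) := by
  have h := Lk_sub_Lk_left (k := k) A C B (subset_refl (vertexSet W))
  have hx := Finset.single_le_sum (f := fun u => (multDU k W u : ℝ)⁻ * (C u - A u))
    (fun u hu => mul_nonneg (negPart_nonneg _) (sub_nonneg.2 (hAC u hu))) hx
  linarith

theorem exists_Lk_lt_of_eq_add_Pneg {A C B : Pt n → ℝ} (hAC : ∀ u ∈ D, A u ≤ C u) {x : Pt n}
    (hCx : C x = A x + Pneg k D A B x)
    (hne : ∃ X : Multiset (Box n), memRk k D X ∧ multDU k X x < 0) {ε : ℝ} (hε : 0 < ε) :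
    ∃ W : Multiset (Box n), memRk k D W ∧ multDU k W x < 0 ∧
      Lk k C B W < ε * |(multDU k W x : ℝ)| := by
  obtain ⟨X, hX, hXx⟩ := hne
  obtain ⟨_, ⟨W, hW, hWx, rfl⟩, hlt⟩ := Real.lt_sInf_add_pos (s := {r : ℝ | ∃ Y : Multiset (Box n),
    memRk k D Y ∧ multDU k Y x < 0 ∧ r = Lk k A B Y / |(multDU k Y x : ℝ)|}) ⟨_, X, hX, hXx, rfl⟩ hε
  refine ⟨W, hW, hWx, ?_⟩
  have hxW := mem_vertexSet_of_multDU_ne_zero hWx.ne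
  have hle := Lk_le_sub_negPart_mul (k := k) (B := B)
    (fun u hu => hAC u (hW.mem_of_mem_vertexSet hu)) hxW
  have habs : 0 < |(multDU k W x : ℝ)| := abs_pos.2 (by exact_mod_cast hWx.ne)
  rw [negPart_intCast_eq_abs hWx, hCx, add_sub_cancel_left] at hle
  change _ < Pneg k D A B x + ε at hlt
  rw [div_lt_iff₀ habs] at hlt
  linarith

end Raising

section Boxes

variable {n k : ℕ}

def Box.span (x z : Pt n) : Box n :=
  ⟨fun i => min (x i) (z i), fun i => max (x i) (z i)⟩

theorem Box.isVertex_span_left (x z : Pt n) : (Box.span x z).IsVertex x := fun i => by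
  rcases le_total (x i) (z i) with h | h
  · exact Or.inl (min_eq_left h).symm
  · exact Or.inr (max_eq_left h).symm

theorem Box.mult_span_left (x z : Pt n) :
    (Box.span x z).mult k x = (-1) ^ ((Finset.univ.filter fun i => x i ≤ z i).card + (n - k)) := by
  rw [Box.mult, if_pos (Box.isVertex_span_left x z), Box.sign]
  congr 3
  ext i
  simp [Box.span]

theorem Box.isKBox_span {x z : Pt n} (hx : inCube x) (hz : inCube z)
    (hk : (Finset.univ.filter fun i => x i ≠ z i).card = k) : (Box.span x z).IsKBox k := by
  refine ⟨fun i => ?_, fun i => ?_, fun i => min_le_max, ?_⟩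
  · show min (x i) (z i) ∈ _
    rcases min_choice (x i) (z i) with h | h <;> rw [h]
    exacts [hx i, hz i]
  · show max (x i) (z i) ∈ _
    rcases max_choice (x i) (z i) with h | h <;> rw [h]
    exacts [hx i, hz i]
  · simp only [Box.span, min_lt_max]
    exact hk

theorem Box.mem_of_mem_vertices_span {δ : Fin n → Set ℝ} {x z : Pt n} (hx : ∀ i, x i ∈ δ i)
    (hz : ∀ i, z i ∈ δ i) {v : Pt n} (hv : v ∈ (Box.span x z).vertices) (i : Fin n) :
    v i ∈ δ i := by
  rcases Box.mem_vertices.1 hv i with h | h <;> rw [h] <;> simp only [Box.span]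
  · rcases min_choice (x i) (z i) with h | h <;> rw [h]
    exacts [hx i, hz i]
  · rcases max_choice (x i) (z i) with h | h <;> rw [h]
    exacts [hx i, hz i]

theorem card_filter_le_update_one {x : Pt n} {i₀ : Fin n} (h0 : 0 < x i₀) (h1 : x i₀ ≤ 1)
    (z : Pt n) :
    (Finset.univ.filter fun i => x i ≤ Function.update z i₀ 1 i).card =
      (Finset.univ.filter fun i => x i ≤ Function.update z i₀ 0 i).card + 1 := by
  rw [← Finset.card_insert_of_notMem (a := i₀) (by simp [h0])]
  congr 1
  ext i
  rcases eq_or_ne i i₀ with rfl | hi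
  · simpa using h1
  · simp [hi]

/-- Sending the coordinate `x i₀ ∈ (0, 1)` of the opposite corner to `0` or to `1` gives two
`k`-boxes in which `x` has opposite multiplicities, so one of them is `-1`. -/
theorem exists_isKBox_mult_eq_neg_one (hk1 : 1 ≤ k) (hkn : k ≤ n) {δ : Fin n → Set ℝ}
    (hδ : ∀ i, δ i ⊆ Set.Icc 0 1 ∧ (0 : ℝ) ∈ δ i ∧ (1 : ℝ) ∈ δ i) {x : Pt n}
    (hx : ∀ i, x i ∈ δ i) {i₀ : Fin n} (hx0 : x i₀ ≠ 0) (hx1 : x i₀ ≠ 1) :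
    ∃ R : Box n, R.IsKBox k ∧ (∀ v ∈ R.vertices, ∀ i, v i ∈ δ i) ∧ R.mult k x = -1 := by
  obtain ⟨K, hi₀K, hK⟩ := Finset.exists_superset_card_eq (s := {i₀})
    (by simpa using hk1) (by simpa using hkn)
  have hi₀K : i₀ ∈ K := hi₀K (Finset.mem_singleton_self i₀)
  let z : Pt n := fun i => if i ∈ K then (if x i = 0 then 1 else 0) else x i
  have hxI : inCube x := fun i => (hδ i).1 (hx i)
  have hspan : ∀ c : ℝ, c = 0 ∨ c = 1 → (Box.span x (Function.update z i₀ c)).IsKBox k ∧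
      ∀ v ∈ (Box.span x (Function.update z i₀ c)).vertices, ∀ i, v i ∈ δ i := by
    intro c hc
    have hzδ : ∀ i, Function.update z i₀ c i ∈ δ i := by
      intro i
      rcases eq_or_ne i i₀ with rfl | hi
      · rcases hc with rfl | rfl <;> simp [hδ]
      · simp only [Function.update_of_ne hi, z]
        split_ifs <;> simp [hδ, hx]
    refine ⟨Box.isKBox_span hxI (fun i => (hδ i).1 (hzδ i)) ?_,
      fun v hv => Box.mem_of_mem_vertices_span hx hzδ hv⟩
    rw [← hK]
    congr 1
    ext i
    rcases eq_or_ne i i₀ with rfl | hi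
    · rcases hc with rfl | rfl <;> simp [hx0, hx1, hi₀K]
    · simp only [Function.update_of_ne hi, z, Finset.mem_filter, Finset.mem_univ, true_and]
      split_ifs <;> simp_all
  have hopp : (Box.span x (Function.update z i₀ 1)).mult k x =
      -(Box.span x (Function.update z i₀ 0)).mult k x := by
    have h0 : 0 < x i₀ := lt_of_le_of_ne (hxI i₀).1 (Ne.symm hx0)
    rw [Box.mult_span_left, Box.mult_span_left, card_filter_le_update_one h0 (hxI i₀).2,
      add_right_comm, pow_succ]
    ring
  rcases neg_one_pow_eq_or ℤ ((Finset.univ.filter fun i => x i ≤ Function.update z i₀ 0 i).card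
    + (n - k)) with h | h
  · exact ⟨_, (hspan 1 (Or.inr rfl)).1, (hspan 1 (Or.inr rfl)).2, by
      rw [hopp, Box.mult_span_left, h]⟩
  · exact ⟨_, (hspan 0 (Or.inl rfl)).1, (hspan 0 (Or.inl rfl)).2, by rw [Box.mult_span_left, h]⟩

theorem exists_memRk_multDU_neg (hk1 : 1 ≤ k) (hkn : k ≤ n) {D : Set (Pt n)} (hD : IsMesh D)
    {x : Pt n} (hx : x ∈ D) (hxv : ¬ isCubeVertex x) :
    ∃ X : Multiset (Box n), memRk k D X ∧ multDU k X x < 0 := by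
  obtain ⟨δ, hδ, rfl⟩ := hD
  obtain ⟨i₀, hx0, hx1⟩ : ∃ i₀, x i₀ ≠ 0 ∧ x i₀ ≠ 1 := by
    simpa [isCubeVertex] using hxv
  obtain ⟨R, hR, hRδ, hRx⟩ := exists_isKBox_mult_eq_neg_one hk1 hkn
    (fun i => ⟨(hδ i).1, (hδ i).2.2.2.2⟩) hx hx0 hx1
  refine ⟨{R}, fun R' hR' => ?_, by simp [multDU, hRx]⟩
  rw [Multiset.mem_singleton.1 hR']
  exact ⟨hR, hRδ⟩

end Boxes

section Excess

variable {n k : ℕ} {D : Set (Pt n)} {C B : Pt n → ℝ}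

theorem posExcess_insert {x : Pt n} {T : Finset (Pt n)} (hxT : x ∉ T) (X : Multiset (Box n)) :
    posExcess k C B (insert x T) X =
      (multDU k X x : ℝ)⁺ * (B x - C x) + posExcess k C B T X :=
  Finset.sum_insert hxT

theorem posExcess_nonneg {T : Finset (Pt n)} (hT : ∀ u ∈ T, C u ≤ B u) (X : Multiset (Box n)) :
    0 ≤ posExcess k C B T X :=
  Finset.sum_nonneg fun u hu => mul_nonneg (posPart_nonneg _) (sub_nonneg.2 (hT u hu))

theorem posPart_add_mul_le {a b p q : ℝ} (ha : 0 ≤ a) (hb : 0 ≤ b) :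
    (a * p + b * q)⁺ ≤ a * p⁺ + b * q⁺ :=
  sup_le (add_le_add (mul_le_mul_of_nonneg_left (le_posPart p) ha)
    (mul_le_mul_of_nonneg_left (le_posPart q) hb)) (by positivity)

theorem posExcess_nsmul_add_nsmul_defect_mono {T S : Finset (Pt n)} (hTS : T ⊆ S)
    (hS : ∀ u ∈ S, C u ≤ B u) (X W : Multiset (Box n)) (a b : ℕ) :
    a * posExcess k C B T X + b * posExcess k C B T W - posExcess k C B T (a • X + b • W) ≤
      a * posExcess k C B S X + b * posExcess k C B S W - posExcess k C B S (a • X + b • W) := by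
  have hsum : ∀ U : Finset (Pt n), a * posExcess k C B U X + b * posExcess k C B U W -
      posExcess k C B U (a • X + b • W) = ∑ u ∈ U, ((a : ℝ) * (multDU k X u : ℝ)⁺ +
        b * (multDU k W u : ℝ)⁺ - (multDU k (a • X + b • W) u : ℝ)⁺) * (B u - C u) := by
    intro U
    simp only [posExcess, Finset.mul_sum, ← Finset.sum_add_distrib, ← Finset.sum_sub_distrib]
    exact Finset.sum_congr rfl fun u _ => by ring
  rw [hsum, hsum]
  refine Finset.sum_le_sum_of_subset_of_nonneg hTS fun u hu _ => mul_nonneg ?_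
    (sub_nonneg.2 (hS u hu))
  rw [sub_nonneg, multDU_nsmul_add_nsmul]
  push_cast
  exact posPart_add_mul_le (Nat.cast_nonneg a) (Nat.cast_nonneg b)

/-- The multiplicity at `x` cancels in `a • X + b • W`, so the estimate on `T` applies to it. -/
theorem mul_posExcess_insert_le (hCB : ∀ u ∈ D, C u ≤ B u) {x : Pt n} {T : Finset (Pt n)}
    (hxT : x ∉ T) (hT : ∀ u ∈ insert x T, u ∈ D)
    (ih : ∀ Y : Multiset (Box n), memRk k D Y → posExcess k C B T Y ≤ Lk k C B Y)
    {X W : Multiset (Box n)} (hX : memRk k D X) (hW : memRk k D W) {a b : ℕ}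
    (hXx : multDU k X x = b) (hWx : multDU k W x = -a) :
    a * posExcess k C B (insert x T) X ≤ a * Lk k C B X + b * Lk k C B W := by
  set E := a • X + b • W
  set S := insert x T ∪ (vertexSet X ∪ vertexSet W)
  have hSD : ∀ u ∈ S, u ∈ D := by
    intro u hu
    rcases Finset.mem_union.1 hu with hu | hu
    · exact hT u hu
    rcases Finset.mem_union.1 hu with hu | hu
    · exact hX.mem_of_mem_vertexSet hu
    · exact hW.mem_of_mem_vertexSet hu
  have hXS : vertexSet X ⊆ S := Finset.subset_union_left.trans Finset.subset_union_right
  have hWS : vertexSet W ⊆ S := Finset.subset_union_right.trans Finset.subset_union_right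
  have hES : vertexSet E ⊆ S :=
    (vertexSet_nsmul_add_nsmul_subset X W a b).trans Finset.subset_union_right
  have hEx : multDU k E x = 0 := by
    rw [multDU_nsmul_add_nsmul, hXx, hWx]
    ring
  have hE : posExcess k C B (insert x T) E ≤ Lk k C B E := by
    rw [posExcess_insert hxT, hEx, Int.cast_zero, posPart_zero, zero_mul, zero_add]
    exact ih E (hX.nsmul_add_nsmul hW a b)
  have hmono := posExcess_nsmul_add_nsmul_defect_mono (k := k) Finset.subset_union_left
    (fun u hu => hCB u (hSD u hu)) X W a b
  have hWnn := posExcess_nonneg (k := k) (fun u hu => hCB u (hT u hu)) W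
  have hlin := Lk_self_nsmul_add_nsmul (k := k) C X W a b
  have hXe := Lk_sub_Lk_self_eq_posExcess (k := k) C B hXS
  have hWe := Lk_sub_Lk_self_eq_posExcess (k := k) C B hWS
  have hEe := Lk_sub_Lk_self_eq_posExcess (k := k) C B hES
  have hb : (0 : ℝ) ≤ b := Nat.cast_nonneg b
  nlinarith

/-- At each point of `D` where `C < B`, the infimum `P⁻` for `(C, B)` is `0`. -/
def IsSaturated (k : ℕ) (D : Set (Pt n)) (C B : Pt n → ℝ) : Prop :=
  ∀ x ∈ D, C x < B x → ∀ ε : ℝ, 0 < ε → ∃ W : Multiset (Box n),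
    memRk k D W ∧ multDU k W x < 0 ∧ Lk k C B W < ε * |(multDU k W x : ℝ)|

theorem posExcess_le_Lk (h : AdmissiblePair k D C B) (hsat : IsSaturated k D C B)
    (T : Finset (Pt n)) (hT : ∀ u ∈ T, u ∈ D) (X : Multiset (Box n)) (hX : memRk k D X) :
    posExcess k C B T X ≤ Lk k C B X := by
  induction T using Finset.induction_on generalizing X with
  | empty => exact h.2 X hX
  | insert x T hxT ih =>
    have ih' := ih fun u hu => hT u (Finset.mem_insert_of_mem hu)
    have hx := hT x (Finset.mem_insert_self x T)
    by_cases hpos : 0 < multDU k X x ∧ C x < B x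
    swap
    · have hzero : (multDU k X x : ℝ)⁺ * (B x - C x) = 0 := by
        rcases not_and_or.1 hpos with hm | hCx
        · rw [posPart_eq_zero.2 (by exact_mod_cast not_lt.1 hm), zero_mul]
        · rw [le_antisymm (h.1 x hx) (not_lt.1 hCx), sub_self, mul_zero]
      rw [posExcess_insert hxT, hzero, zero_add]
      exact ih' X hX
    obtain ⟨hXx, hCx⟩ := hpos
    lift multDU k X x to ℕ using hXx.le with b hb
    refine le_of_forall_pos_lt_add fun ε hε => ?_
    obtain ⟨W, hW, hWx, hLW⟩ := hsat x hx hCx (ε / b) (div_pos hε (by exact_mod_cast hXx))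
    obtain ⟨a, ha⟩ := Int.exists_eq_neg_ofNat hWx.le
    have ha0 : (0 : ℝ) < a := by
      have : (0 : ℤ) < a := by omega
      exact_mod_cast this
    have hstep := mul_posExcess_insert_le h.1 hxT hT ih' hX hW hb.symm ha
    rw [ha, Int.cast_neg, Int.cast_natCast, abs_neg, Nat.abs_cast] at hLW
    have hbW : b * Lk k C B W < a * ε := by
      have hb0 : (0 : ℝ) < b := by exact_mod_cast hXx
      calc (b : ℝ) * Lk k C B W < b * (ε / b * a) := by gcongr
        _ = a * ε := by field_simp
    nlinarith

theorem AdmissiblePair.Lk_self_nonneg (h : AdmissiblePair k D C B) (hsat : IsSaturated k D C B)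
    (X : Multiset (Box n)) (hX : memRk k D X) : 0 ≤ Lk k C C X := by
  have hle := posExcess_le_Lk h hsat (vertexSet X) (fun u hu => hX.mem_of_mem_vertexSet hu) X hX
  linarith [Lk_sub_Lk_self_eq_posExcess (k := k) C B (subset_refl (vertexSet X))]

end Excess

section RaisingSequence

variable {n k : ℕ} {D : Set (Pt n)} {d : ℕ → Pt n} {B : Pt n → ℝ} {As : ℕ → Pt n → ℝ}

def IsRaisingSeq (k : ℕ) (D : Set (Pt n)) (B : Pt n → ℝ) (d : ℕ → Pt n)
    (As : ℕ → Pt n → ℝ) : Prop :=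
  ∀ i, As (i + 1) = Function.update (As i) (d i) (As i (d i) + gammaK k D (As i) B (d i))

theorem IsRaisingSeq.admissiblePair (hAs : IsRaisingSeq k D B d As)
    (h0 : AdmissiblePair k D (As 0) B) : ∀ i, AdmissiblePair k D (As i) B
  | 0 => h0
  | i + 1 => hAs i ▸ (hAs.admissiblePair h0 i).update_gammaK (d i)

theorem IsRaisingSeq.monotone_apply (hAs : IsRaisingSeq k D B d As) (hd : ∀ i, d i ∈ D)
    (h0 : AdmissiblePair k D (As 0) B) (u : Pt n) : Monotone fun i => As i u := by
  refine monotone_nat_of_le_succ fun i => ?_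
  rw [hAs i]
  rcases eq_or_ne u (d i) with rfl | hu
  · rw [Function.update_self]
    linarith [(hAs.admissiblePair h0 i).gammaK_nonneg (hd i)]
  · rw [Function.update_of_ne hu]

theorem IsRaisingSeq.eq_add_gammaK_of_tendsto (hAs : IsRaisingSeq k D B d As)
    (hdinj : Function.Injective d) {i : ℕ} {c : ℝ}
    (hc : Filter.Tendsto (fun j => As j (d i)) Filter.atTop (nhds c)) :
    c = As i (d i) + gammaK k D (As i) B (d i) := by
  have hconst : ∀ j ≥ i + 1, As j (d i) = As (i + 1) (d i) := by
    intro j hj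
    induction j, hj using Nat.le_induction with
    | base => rfl
    | succ j hj ih =>
      rw [hAs j, Function.update_of_ne (hdinj.ne (by omega)), ih]
  rw [tendsto_nhds_unique hc (tendsto_atTop_of_eventually_const hconst), hAs i,
    Function.update_self]

end RaisingSequence

end KIncr

open KIncr
theorem stmt9_general (n k : ℕ) (hk1 : 1 ≤ k) (hkn : k ≤ n)
    (D : Set (Pt n)) (hD : IsMesh D)
    (d : ℕ → Pt n) (hdinj : Function.Injective d) (hdrange : Set.range d = D)
    (A B : Pt n → ℝ)
    (hAB : ∀ u ∈ D, A u ≤ B u)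
    (hL : ∀ DU : Multiset (Box n), memRk k D DU → 0 ≤ Lk k A B DU)
    (hvert : ∀ w : Pt n, isCubeVertex w → A w = B w)
    (As : ℕ → Pt n → ℝ) (hAs0 : As 0 = A)
    (hAsSucc : ∀ i : ℕ, ∀ u : Pt n,
      As (i + 1) u = if u = d i then As i u + gammaK k D (As i) B (d i) else As i u)
    (C : Pt n → ℝ)
    (hC : ∀ u ∈ D, Filter.Tendsto (fun i => As i u) Filter.atTop (nhds (C u))) :
    ∀ DU : Multiset (Box n), memRk k D DU → 0 ≤ Lk k C C DU := by
  have hdD : ∀ i, d i ∈ D := fun i => hdrange ▸ Set.mem_range_self i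
  have hAs : IsRaisingSeq k D B d As := fun i =>
    funext fun u => by by_cases hu : u = d i <;> simp [hAsSucc, hu]
  have h0 : AdmissiblePair k D (As 0) B := hAs0 ▸ ⟨hAB, hL⟩
  have hle : ∀ i, ∀ u ∈ D, As i u ≤ C u := fun i u hu =>
    (hAs.monotone_apply hdD h0 u).ge_of_tendsto (hC u hu) i
  refine (AdmissiblePair.of_tendsto (hAs.admissiblePair h0) hC).Lk_self_nonneg
    fun x hx hxB ε hε => ?_
  obtain ⟨i, rfl⟩ := hdrange ▸ hx
  have hCx := hAs.eq_add_gammaK_of_tendsto hdinj (hC _ hx)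
  have hxv : ¬ isCubeVertex (d i) := fun hv => by
    linarith [hAs0 ▸ hle 0 _ hx, hvert _ hv]
  rw [gammaK_eq_Pneg (by linarith)] at hCx
  exact exists_Lk_lt_of_eq_add_Pneg (hle i) hCx (exists_memRk_multDU_neg hk1 hkn hD hx hxv) hε

/-- Proposition 4.5: the pointwise limit `C` of the sequence
obtained by raising `A` is `k`-increasing on the mesh. -/
theorem stmt9 (n k : ℕ) (hn : 1 ≤ n) (hk1 : 1 ≤ k) (hkn : k ≤ n)
    (D : Set (Pt n)) (hD : IsMesh D)
    (d : ℕ → Pt n) (hdinj : Function.Injective d) (hdrange : Set.range d = D)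
    (A B : Pt n → ℝ)
    (hAI : ∀ u ∈ D, A u ∈ Set.Icc (0:ℝ) 1) (hBI : ∀ u ∈ D, B u ∈ Set.Icc (0:ℝ) 1)
    (hAB : ∀ u ∈ D, A u ≤ B u)
    (hL : ∀ DU : Multiset (Box n), memRk k D DU → 0 ≤ Lk k A B DU)
    (hvert : ∀ w : Pt n, isCubeVertex w → A w = B w)
    (As : ℕ → Pt n → ℝ) (hAs0 : As 0 = A)
    (hAsSucc : ∀ i : ℕ, ∀ u : Pt n,
      As (i + 1) u = if u = d i then As i u + gammaK k D (As i) B (d i) else As i u)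
    (C : Pt n → ℝ)
    (hC : ∀ u ∈ D, Filter.Tendsto (fun i => As i u) Filter.atTop (nhds (C u))) :
    ∀ DU : Multiset (Box n), memRk k D DU → 0 ≤ Lk k C C DU :=
  stmt9_general n k hk1 hkn D hD d hdinj hdrange A B hAB hL hvert As hAs0 hAsSucc C hC
end

section
/- Let D be a dense countably infinite mesh in I^n and fix an integer k with 1 ≤ k ≤ n. Let A, C : D → I be functions with A ≤ C, L_k^{(A,C)}(DU) ≥ 0 for all DU ∈ R_k(D), and δ_{k,D}^{(A,C)}(d) = 0 for all d ∈ D. Assume A(v) = C(v) for all vertices v of the unit cube I^n, and that there exists a k-box Q with vertices in D such that V_{C,k}(Q) = v < 0. Then there exist s ∈ {1,…,2^{k−1}} and an enumeration x_1,…,x_{2^{k−1}} of the vertices of Q with multiplicity m_Q(x_i) = −1 such that: for each i ∈ {1,…,s}, A(x_i) < C(x_i) and there exists DU_i ∈ R_k(D) with m_{DU_i}(x_i) > 0 and L_k^{(A,C)}(DU_i)/|m_{DU_i}(x_i)| < |v|/s; and A(x_i) = C(x_i) for each i with s < i ≤ 2^{k−1}. -/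
open scoped Classical BigOperators

/-! The negative vertices of `Q` are its corners whose set of lower nondegenerate coordinates
has odd size, so there are `2 ^ (k - 1)` of them. Comparing `V_{C,k}(Q)` with
`L_k^{(A,C)}(Q) ≥ 0` gives `∑ (C x - A x) ≥ -v > 0` over the negative vertices, so some of them
satisfy `A < C`; these are listed first. Such a vertex is not a vertex of `I^n`, so it has a
coordinate in `(0,1)`, and the density of the mesh yields a `k`-box with vertices in `D` in which
it has multiplicity `+1`. Thus `P⁺` is the infimum of a nonempty set of nonnegative numbers, and
`δ = 0` together with `A < C` forces it to be `0`, which provides the required `DU` below any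
positive bound, e.g. `|v| / s`. -/

theorem exists_mem_Ioo_of_Icc_subset_closure {s : Set ℝ} (hs : Set.Icc 0 1 ⊆ closure s)
    {a b : ℝ} (ha : 0 ≤ a) (hab : a < b) (hb : b ≤ 1) : ∃ y ∈ s, y ∈ Set.Ioo a b := by
  have hmid : (a + b) / 2 ∈ closure s := hs ⟨by linarith, by linarith⟩
  obtain ⟨y, hy, hys⟩ :=
    mem_closure_iff.1 hmid (Set.Ioo a b) isOpen_Ioo ⟨by linarith, by linarith⟩
  exact ⟨y, hys, hy⟩

namespace Finset

theorem card_powerset_filter_odd {α : Type*} {T : Finset α} (hT : T.Nonempty) :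
    (T.powerset.filter fun S => Odd S.card).card = 2 ^ (T.card - 1) := by
  have hsum := sum_powerset_neg_one_pow_card_of_nonempty hT
  rw [← sum_filter_add_sum_filter_not _ (fun S => Odd S.card)] at hsum
  have hodd : ∑ S ∈ T.powerset.filter (fun S => Odd S.card), (-1 : ℤ) ^ S.card
      = -(T.powerset.filter fun S => Odd S.card).card := by
    rw [sum_congr rfl fun S hS => (mem_filter.1 hS).2.neg_one_pow]; simp
  have heven : ∑ S ∈ T.powerset.filter (fun S => ¬Odd S.card), (-1 : ℤ) ^ S.card
      = (T.powerset.filter fun S => ¬Odd S.card).card := by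
    rw [sum_congr rfl fun S hS =>
      (Nat.not_odd_iff_even.1 (mem_filter.1 hS).2).neg_one_pow]; simp
  have htotal := card_filter_add_card_filter_not (s := T.powerset) (fun S => Odd S.card)
  rw [card_powerset] at htotal
  have hpow : 2 ^ T.card = 2 * 2 ^ (T.card - 1) := by
    rw [← pow_succ', Nat.sub_add_cancel hT.card_pos]
  omega

theorem card_filter_update_eq {ι α : Type*} [Fintype ι] [DecidableEq ι] (r : α → α → Prop)
    [DecidableRel r] {u d : ι → α} {j : ι} (hj : ¬r (u j) (d j)) (y : α) :
    (univ.filter fun i => r (u i) (Function.update d j y i)).card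
      = (univ.filter fun i => r (u i) (d i)).card + if r (u j) y then 1 else 0 := by
  simp only [card_filter]
  rw [← add_sum_erase _ _ (mem_univ j), ← add_sum_erase _ _ (mem_univ j), Function.update_self,
    if_neg hj, zero_add, add_comm]
  congr 1
  refine sum_congr rfl fun i hi => ?_
  rw [Function.update_of_ne (ne_of_mem_erase hi)]

theorem exists_injective_fin_range_eq_of_subset {α : Type*} {N N₁ : Finset α} (h : N₁ ⊆ N)
    {m : ℕ} (hm : N.card = m) :
    ∃ x : Fin m → α,
      Function.Injective x ∧ Set.range x = N ∧ ∀ i, x i ∈ N₁ ↔ (i : ℕ) < N₁.card := by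
  set l := N₁.toList ++ (N \ N₁).toList
  have hl : l.length = m := by
    simp [l, card_sdiff_of_subset h, ← hm, card_le_card h]
  have hnodup : l.Nodup := (nodup_toList _).append (nodup_toList _)
    (fun a ha hb => (mem_sdiff.1 (mem_toList.1 hb)).2 (mem_toList.1 ha))
  refine ⟨fun i => l[(i : ℕ)]'(hl ▸ i.2), fun i j hij => ?_, ?_, fun i => ?_⟩
  · exact Fin.ext ((hnodup.getElem_inj_iff).1 hij)
  · ext a
    have hmem : a ∈ l ↔ a ∈ N := by
      simp only [l, List.mem_append, mem_toList, mem_sdiff]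
      exact ⟨fun ha => ha.elim (fun ha => h ha) And.left,
        fun ha => (em (a ∈ N₁)).imp_right fun ha' => ⟨ha, ha'⟩⟩
    rw [mem_coe, ← hmem, List.mem_iff_getElem]
    exact ⟨fun ⟨i, hi⟩ => ⟨i, hl ▸ i.2, hi⟩,
      fun ⟨i, hi, hia⟩ => ⟨⟨i, hl ▸ hi⟩, hia⟩⟩
  · simp only [l, List.getElem_append, length_toList]
    split_ifs with hi
    · simpa [hi] using mem_toList.1 (List.getElem_mem _)
    · simpa [hi] using (mem_sdiff.1 (mem_toList.1 (List.getElem_mem _))).2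

end Finset

namespace KIncr

open Finset

variable {n k : ℕ}

namespace Box

noncomputable def nondegCoords (R : Box n) : Finset (Fin n) :=
  univ.filter fun i => R.lo i < R.hi i

noncomputable def lowerCoords (R : Box n) (v : Pt n) : Finset (Fin n) :=
  R.nondegCoords.filter fun i => v i = R.lo i

noncomputable def cornerLowerOn (R : Box n) (S : Finset (Fin n)) : Pt n :=
  fun i => if i ∈ S then R.lo i else R.hi i

noncomputable def negVertices (k : ℕ) (R : Box n) : Finset (Pt n) :=
  R.vertices.filter fun u => R.mult k u = -1

theorem mem_vertices_iff_isVertex {R : Box n} {v : Pt n} : v ∈ R.vertices ↔ R.IsVertex v := by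
  constructor
  · intro hv
    obtain ⟨ε, -, rfl⟩ := mem_image.mp hv
    intro i
    by_cases h : ε i <;> simp [h]
  · intro hv
    refine mem_image.mpr ⟨fun i => decide (v i = R.hi i), mem_univ _, ?_⟩
    funext i
    by_cases h : v i = R.hi i
    · simp [h]
    · simpa [h] using ((hv i).resolve_right h).symm

theorem mult_of_mem_vertices {R : Box n} {v : Pt n} (hv : v ∈ R.vertices) :
    R.mult k v = R.sign k v :=
  if_pos (mem_vertices_iff_isVertex.1 hv)

theorem mult_eq_neg_one_pow {R : Box n} (hR : R.IsKBox k) {v : Pt n} (hv : v ∈ R.vertices) :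
    R.mult k v = (-1) ^ (R.lowerCoords v).card := by
  have hdeg : (univ.filter fun i => ¬R.lo i < R.hi i).card = n - k := by
    rw [filter_not, card_sdiff_of_subset (filter_subset _ _), hR.2.2.2,
      card_univ, Fintype.card_fin]
  have hlower : (univ.filter fun i => v i = R.lo i).card
      = (R.lowerCoords v).card + (n - k) := by
    rw [← card_filter_add_card_filter_not (p := fun i => R.lo i < R.hi i), ← hdeg,
      lowerCoords, nondegCoords, filter_filter, filter_filter]
    congr 2
    · ext i; simp [and_comm]
    · ext i
      simp only [mem_filter, mem_univ, true_and, and_iff_right_iff_imp]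
      intro h
      rcases mem_vertices_iff_isVertex.1 hv i with h' | h'
      · exact h'
      · rw [h']; exact (le_antisymm (hR.2.2.1 i) (not_lt.1 h)).symm
  rw [mult_of_mem_vertices hv, sign, hlower, add_assoc, pow_add, ← two_mul, pow_mul]
  simp

theorem cornerLowerOn_mem_vertices (R : Box n) (S : Finset (Fin n)) :
    R.cornerLowerOn S ∈ R.vertices :=
  mem_vertices_iff_isVertex.2 fun i => by by_cases h : i ∈ S <;> simp [cornerLowerOn, h]

theorem lowerCoords_cornerLowerOn {R : Box n} {S : Finset (Fin n)} (hS : S ⊆ R.nondegCoords) :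
    R.lowerCoords (R.cornerLowerOn S) = S := by
  ext i
  by_cases h : i ∈ S
  · simpa [lowerCoords, cornerLowerOn, h] using hS h
  · simpa [lowerCoords, nondegCoords, cornerLowerOn, h] using fun hlt => hlt.ne'

theorem cornerLowerOn_lowerCoords {R : Box n} (hR : ∀ i, R.lo i ≤ R.hi i) {v : Pt n}
    (hv : v ∈ R.vertices) : R.cornerLowerOn (R.lowerCoords v) = v := by
  funext i
  rcases mem_vertices_iff_isVertex.1 hv i with h | h
  · by_cases hlt : R.lo i < R.hi i
    · simp [cornerLowerOn, lowerCoords, nondegCoords, hlt, h]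
    · simp [cornerLowerOn, lowerCoords, nondegCoords, h, le_antisymm (hR i) (not_lt.1 hlt)]
  · simpa [cornerLowerOn, lowerCoords, h] using fun _ => Eq.symm

theorem card_negVertices {R : Box n} (hR : R.IsKBox k) (hk : 1 ≤ k) :
    (R.negVertices k).card = 2 ^ (k - 1) := by
  have hT : R.nondegCoords.card = k := hR.2.2.2
  conv_rhs => rw [← hT, ← card_powerset_filter_odd (card_pos.1 (by omega))]
  refine card_nbij' R.lowerCoords R.cornerLowerOn ?_ ?_ ?_ ?_
  · intro v hv
    simp only [negVertices, coe_filter, Set.mem_ofPred_eq] at hv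
    rw [mult_eq_neg_one_pow hR hv.1, neg_one_pow_eq_neg_one_iff_odd (by decide)] at hv
    simpa [lowerCoords] using hv.2
  · intro S hS
    simp only [coe_filter, mem_powerset, Set.mem_ofPred_eq] at hS
    refine mem_filter.2 ⟨cornerLowerOn_mem_vertices R S, ?_⟩
    rw [mult_eq_neg_one_pow hR (cornerLowerOn_mem_vertices R S), lowerCoords_cornerLowerOn hS.1,
      hS.2.neg_one_pow]
  · intro v hv
    exact cornerLowerOn_lowerCoords hR.2.2.1 (mem_filter.1 hv).1
  · intro S hS
    exact lowerCoords_cornerLowerOn (mem_powerset.1 (mem_filter.1 hS).1)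

def span_s12 (u d : Pt n) : Box n := ⟨fun i => min (u i) (d i), fun i => max (u i) (d i)⟩

theorem span_isKBox {u d : Pt n} (hu : inCube u) (hd : inCube d)
    (hk : (univ.filter fun i => u i ≠ d i).card = k) : (span_s12 u d).IsKBox k := by
  refine ⟨fun i => ⟨le_min (hu i).1 (hd i).1, (min_le_left _ _).trans (hu i).2⟩,
    fun i => ⟨(hu i).1.trans (le_max_left _ _), max_le (hu i).2 (hd i).2⟩,
    fun i => min_le_max, ?_⟩
  simpa [span_s12, min_lt_max, eq_comm] using hk

theorem eq_or_eq_of_mem_span_vertices {u d w : Pt n} (hw : w ∈ (span_s12 u d).vertices)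
    (i : Fin n) : w i = u i ∨ w i = d i := by
  rcases mem_vertices_iff_isVertex.1 hw i with h | h <;> rw [h]
  exacts [min_choice _ _, max_choice _ _]

theorem mult_span_left_s12 {u d : Pt n} (hR : (span_s12 u d).IsKBox k) :
    (span_s12 u d).mult k u = (-1) ^ (univ.filter fun i => u i < d i).card := by
  have hu : u ∈ (span_s12 u d).vertices := mem_vertices_iff_isVertex.2 fun i =>
    (le_total (u i) (d i)).imp (fun h => (min_eq_left h).symm) (fun h => (max_eq_left h).symm)
  rw [mult_eq_neg_one_pow hR hu]
  congr 2
  ext i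
  simp only [lowerCoords, nondegCoords, span_s12, mem_filter, mem_univ, true_and, min_lt_max]
  exact ⟨fun ⟨hne, hle⟩ => lt_of_le_of_ne (min_eq_left_iff.1 hle.symm) hne,
    fun h => ⟨h.ne, (min_eq_left h.le).symm⟩⟩

end Box

theorem multDU_singleton (R : Box n) (u : Pt n) : multDU k {R} u = R.mult k u := by
  simp [multDU]

theorem Vvol_sub_Lk_singleton (A B : Pt n → ℝ) (R : Box n) :
    Vvol k B R - Lk k A B {R} = ∑ u ∈ R.negVertices k, (A u - B u) := by
  simp only [Vvol, Lk, multDU_singleton, Multiset.toFinset_singleton, singleton_biUnion,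
    Box.negVertices, sum_filter, ← sum_sub_distrib]
  refine sum_congr rfl fun u hu => ?_
  rw [Box.mult_of_mem_vertices hu, Box.sign]
  rcases neg_one_pow_eq_or ℤ ((univ.filter fun i => u i = R.lo i).card + (n - k)) with h | h <;>
    norm_num [h, neg_add_eq_sub]

theorem exists_mem_negVertices_lt {A B : Pt n → ℝ} {R : Box n} (hV : Vvol k B R < 0)
    (hL : 0 ≤ Lk k A B {R}) : ∃ u ∈ R.negVertices k, A u < B u := by
  have hsum := Vvol_sub_Lk_singleton (k := k) A B R
  rw [sum_sub_distrib] at hsum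
  exact exists_lt_of_sum_lt (by linarith)

theorem exists_pi_mem_filter_ne_eq {δ : Fin n → Set ℝ} (hδ : ∀ i, (δ i).Infinite)
    {u : Pt n} (hu : ∀ i, u i ∈ δ i) (K : Finset (Fin n)) :
    ∃ d : Pt n, (∀ i, d i ∈ δ i) ∧ (univ.filter fun i => u i ≠ d i) = K := by
  choose t ht using fun i => ((hδ i).sdiff (Set.finite_singleton (u i))).nonempty
  refine ⟨fun i => if i ∈ K then t i else u i, fun i => ?_, ?_⟩
  · by_cases h : i ∈ K <;> simp [h, hu i, (ht i).1]
  · ext i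
    by_cases h : i ∈ K
    · simpa [h] using Ne.symm (ht i).2
    · simp [h]

theorem exists_kBox_mult_eq_one {δ : Fin n → Set ℝ} (hδI : ∀ i, δ i ⊆ Set.Icc 0 1)
    (hδ : ∀ i, (δ i).Infinite) {j : Fin n} (hδj : Set.Icc 0 1 ⊆ closure (δ j)) {u : Pt n}
    (hu : ∀ i, u i ∈ δ i) (hj : u j ∈ Set.Ioo 0 1) (hk : 1 ≤ k) (hkn : k ≤ n) :
    ∃ R : Box n,
      R.IsKBox k ∧ (∀ w ∈ R.vertices, ∀ i, w i ∈ δ i) ∧ R.mult k u = 1 := by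
  obtain ⟨K, hKj, hK⟩ := exists_subset_card_eq (s := univ.erase j) (n := k - 1)
    (by rw [card_erase_of_mem (mem_univ j), card_univ, Fintype.card_fin]; omega)
  obtain ⟨d₀, hd₀, hd₀K⟩ := exists_pi_mem_filter_ne_eq hδ hu K
  have hd₀j : ¬u j ≠ d₀ j := fun h =>
    notMem_erase j univ (hKj (hd₀K ▸ mem_filter.2 ⟨mem_univ j, h⟩))
  obtain ⟨a, ha, hau⟩ := exists_mem_Ioo_of_Icc_subset_closure hδj le_rfl hj.1 hj.2.le
  obtain ⟨b, hb, hub⟩ := exists_mem_Ioo_of_Icc_subset_closure hδj hj.1.le hj.2 le_rfl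
  set p := (univ.filter fun i => u i < d₀ i).card
  -- `d j` is put on the side of `u j` that makes the number of coordinates with `u < d` even
  set d := Function.update d₀ j (if Even p then a else b)
  have hd : ∀ i, d i ∈ δ i := fun i => by
    by_cases h : i = j
    · subst h; simp only [d, Function.update_self]; split_ifs <;> assumption
    · simp only [d, Function.update_of_ne h, hd₀ i]
  have hcard : (univ.filter fun i => u i ≠ d i).card = k := by
    rw [card_filter_update_eq _ hd₀j, hd₀K, hK, if_pos]
    · omega
    · split_ifs
      exacts [hau.2.ne', hub.1.ne]
  have heven : Even (univ.filter fun i => u i < d i).card := by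
    rw [card_filter_update_eq _ fun h => hd₀j h.ne]
    by_cases hp : Even p
    · rw [if_pos hp, if_neg (not_lt.2 hau.2.le)]
      exact hp
    · rw [if_neg hp, if_pos hub.1, Nat.even_add_one]
      exact hp
  have hR := Box.span_isKBox (fun i => hδI i (hu i)) (fun i => hδI i (hd i)) hcard
  refine ⟨Box.span_s12 u d, hR, fun w hw i => ?_, by rw [Box.mult_span_left_s12 hR, heven.neg_one_pow]⟩
  rcases Box.eq_or_eq_of_mem_span_vertices hw i with h | h <;> rw [h]
  exacts [hu i, hd i]

theorem IsMesh.exists_kBox_mult_eq_one {D : Set (Pt n)} (hD : IsMesh D) {u : Pt n} (hu : u ∈ D)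
    (hu' : ¬isCubeVertex u) (hk : 1 ≤ k) (hkn : k ≤ n) :
    ∃ R : Box n, R.IsKBox k ∧ (∀ w ∈ R.vertices, w ∈ D) ∧ R.mult k u = 1 := by
  obtain ⟨δ, hδ, rfl⟩ := hD
  obtain ⟨j, hj0, hj1⟩ : ∃ j, u j ≠ 0 ∧ u j ≠ 1 := by simpa [isCubeVertex] using hu'
  have hjI := (hδ j).1 (hu j)
  exact KIncr.exists_kBox_mult_eq_one (fun i => (hδ i).1) (fun i => (hδ i).2.2.1)
    (hδ j).2.2.2.1 hu ⟨hjI.1.lt_of_ne' hj0, hjI.2.lt_of_ne hj1⟩ hk hkn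

theorem Ppos_eq_zero_of_deltaK_eq_zero {D : Set (Pt n)} {A B : Pt n → ℝ} {x : Pt n}
    (hL : ∀ DU, memRk k D DU → 0 ≤ Lk k A B DU) (hx : deltaK k D A B x = 0)
    (hAB : A x < B x) : Ppos k D A B x = 0 := by
  have hnonneg : 0 ≤ Ppos k D A B x := Real.sInf_nonneg (by
    rintro r ⟨DU, hDU, -, rfl⟩
    exact div_nonneg (hL DU hDU) (abs_nonneg _))
  rw [deltaK] at hx
  rcases min_choice (Ppos k D A B x) (B x - A x) with h | h <;> linarith

theorem exists_Lk_div_lt {D : Set (Pt n)} {A B : Pt n → ℝ} {x : Pt n} (hP : Ppos k D A B x = 0)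
    {R : Box n} (hR : R.IsKBox k) (hRD : ∀ w ∈ R.vertices, w ∈ D) (hRx : R.mult k x = 1)
    {ε : ℝ} (hε : 0 < ε) :
    ∃ DU, memRk k D DU ∧ 0 < multDU k DU x ∧ Lk k A B DU / |(multDU k DU x : ℝ)| < ε := by
  have hne : ∃ r, r ∈ {r : ℝ | ∃ DU, memRk k D DU ∧ 0 < multDU k DU x ∧
      r = Lk k A B DU / |(multDU k DU x : ℝ)|} :=
    ⟨_, {R}, by simpa [memRk] using ⟨hR, hRD⟩, by simp [multDU_singleton, hRx], rfl⟩
  obtain ⟨_, ⟨DU, hDU, hpos, rfl⟩, hlt⟩ :=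
    exists_lt_of_csInf_lt hne (hP.symm ▸ hε : Ppos k D A B x < ε)
  exact ⟨DU, hDU, hpos, hlt⟩

end KIncr

open KIncr
theorem stmt12_general (n k : ℕ) (hk1 : 1 ≤ k) (hkn : k ≤ n)
    (D : Set (Pt n)) (hD : IsMesh D) (A C : Pt n → ℝ)
    (hAC : ∀ u ∈ D, A u ≤ C u)
    (hL : ∀ DU : Multiset (Box n), memRk k D DU → 0 ≤ Lk k A C DU)
    (hdelta : ∀ d ∈ D, deltaK k D A C d = 0)
    (hvert : ∀ w : Pt n, isCubeVertex w → A w = C w)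
    (Q : Box n) (hQ : Q.IsKBox k) (hQD : ∀ w ∈ Q.vertices, w ∈ D)
    (v : ℝ) (hv : Vvol k C Q = v) (hvneg : v < 0) :
    ∃ s : ℕ, 1 ≤ s ∧ s ≤ 2 ^ (k - 1) ∧
      ∃ x : Fin (2 ^ (k - 1)) → Pt n, Function.Injective x ∧
        (∀ i, x i ∈ Q.vertices ∧ Q.mult k (x i) = -1) ∧
        (∀ u ∈ Q.vertices, Q.mult k u = -1 → ∃ i, x i = u) ∧
        (∀ i : Fin (2 ^ (k - 1)), (i : ℕ) < s →
          A (x i) < C (x i) ∧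
          ∃ DU : Multiset (Box n), memRk k D DU ∧ 0 < multDU k DU (x i) ∧
            Lk k A C DU / |(multDU k DU (x i) : ℝ)| < |v| / (s : ℝ)) ∧
        (∀ i : Fin (2 ^ (k - 1)), s ≤ (i : ℕ) → A (x i) = C (x i)) := by
  set N₁ := (Q.negVertices k).filter fun u => A u < C u
  have hQL : 0 ≤ Lk k A C {Q} := hL {Q} (by simpa [memRk] using ⟨hQ, hQD⟩)
  obtain ⟨u₀, hu₀⟩ := exists_mem_negVertices_lt (hv ▸ hvneg) hQL
  have hs : 0 < N₁.card := Finset.card_pos.2 ⟨u₀, Finset.mem_filter.2 hu₀⟩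
  have hN := Box.card_negVertices hQ hk1
  have hN₁ : N₁ ⊆ Q.negVertices k := Finset.filter_subset _ _
  obtain ⟨x, hinj, hrange, hprefix⟩ := Finset.exists_injective_fin_range_eq_of_subset hN₁ hN
  have hxN : ∀ i, x i ∈ Q.negVertices k := fun i =>
    Finset.mem_coe.1 (hrange ▸ Set.mem_range_self i)
  refine ⟨N₁.card, hs, hN ▸ Finset.card_le_card hN₁, x, hinj,
    fun i => Finset.mem_filter.1 (hxN i), fun u hu hmu => ?_, fun i hi => ?_, fun i hi => ?_⟩
  · exact (hrange ▸ Finset.mem_filter.2 ⟨hu, hmu⟩ : u ∈ Set.range x)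
  · have hlt := (Finset.mem_filter.1 ((hprefix i).2 hi)).2
    have hxD := hQD _ (Finset.mem_filter.1 (hxN i)).1
    obtain ⟨R, hR, hRD, hRx⟩ :=
      hD.exists_kBox_mult_eq_one hxD (fun h => hlt.ne (hvert _ h)) hk1 hkn
    exact ⟨hlt, exists_Lk_div_lt (Ppos_eq_zero_of_deltaK_eq_zero hL (hdelta _ hxD) hlt) hR hRD hRx
      (div_pos (abs_pos.2 hvneg.ne) (by exact_mod_cast hs))⟩
  · have hnlt : ¬A (x i) < C (x i) := fun h =>
      (not_lt.2 hi) ((hprefix i).1 (Finset.mem_filter.2 ⟨hxN i, h⟩))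
    exact le_antisymm (hAC _ (hQD _ (Finset.mem_filter.1 (hxN i)).1)) (not_lt.1 hnlt)

/-- Lemma 5.3: dual of Lemma 4.3, for the construction from
 above. -/
theorem stmt12 (n k : ℕ) (hn : 1 ≤ n) (hk1 : 1 ≤ k) (hkn : k ≤ n)
    (D : Set (Pt n)) (hD : IsMesh D) (A C : Pt n → ℝ)
    (hAI : ∀ u ∈ D, A u ∈ Set.Icc (0:ℝ) 1) (hCI : ∀ u ∈ D, C u ∈ Set.Icc (0:ℝ) 1)
    (hAC : ∀ u ∈ D, A u ≤ C u)
    (hL : ∀ DU : Multiset (Box n), memRk k D DU → 0 ≤ Lk k A C DU)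
    (hdelta : ∀ d ∈ D, deltaK k D A C d = 0)
    (hvert : ∀ w : Pt n, isCubeVertex w → A w = C w)
    (Q : Box n) (hQ : Q.IsKBox k) (hQD : ∀ w ∈ Q.vertices, w ∈ D)
    (v : ℝ) (hv : Vvol k C Q = v) (hvneg : v < 0) :
    ∃ s : ℕ, 1 ≤ s ∧ s ≤ 2 ^ (k - 1) ∧
      ∃ x : Fin (2 ^ (k - 1)) → Pt n, Function.Injective x ∧
        (∀ i, x i ∈ Q.vertices ∧ Q.mult k (x i) = -1) ∧
        (∀ u ∈ Q.vertices, Q.mult k u = -1 → ∃ i, x i = u) ∧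
        (∀ i : Fin (2 ^ (k - 1)), (i : ℕ) < s →
          A (x i) < C (x i) ∧
          ∃ DU : Multiset (Box n), memRk k D DU ∧ 0 < multDU k DU (x i) ∧
            Lk k A C DU / |(multDU k DU (x i) : ℝ)| < |v| / (s : ℝ)) ∧
        (∀ i : Fin (2 ^ (k - 1)), s ≤ (i : ℕ) → A (x i) = C (x i)) :=
  stmt12_general n k hk1 hkn D hD A C hAC hL hdelta hvert Q hQ hQD v hv hvneg
end
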